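/- arXiv:2206.01747 — 2 statements merged into one kernel-verified Lean document; each statement's English description precedes it below -/
import Mathlib

section
/- For the constant density kernel f(x,y) = p with p ∈ (0,1] and Poisson counting law K ~ Poisson(c) with c > 0 (so δ² = c), the degree correlation satisfies Corr(d(x), d(y)) = p for x ≠ y; that is, Cov(d(x), d(y)) = c p² and Var(d(x)) = Var(d(y)) = c p, so the Poisson random measure correlates the density field. -/
/-!
Conditionally on `K = k`, which is legitimate because `K` is independent of the pairs
`(Z i, W i)`, the product `d(x) d(y)` expands into `k²` terms `Z i * W j`, each of mean `p²`,
while `d(x)²` splits into the `k` diagonal terms `Z i² = Z i` of mean `p` and `k (k - 1)`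
off-diagonal terms of mean `p²`. The Poisson factorial moments `E[K] = c` and
`E[K (K - 1)] = c²` then give `E[d(x)] = c p`, `E[d(x) d(y)] = (c + c²) p²` and
`E[d(x)²] = c p + c² p²`, hence `Cov = c p²` and `Var = c p`. All moments are first computed
in `[0, ∞]`, where neither Tonelli nor the product formula for independent variables needs
integrability; their finiteness then gives the `L²` bounds.
-/

open MeasureTheory ProbabilityTheory

/-- The covariance `Cov(X,Y) = E[XY] - E[X]E[Y]` of two real random variables. -/
noncomputable def cov {Ω : Type*} [MeasurableSpace Ω] (μ : Measure Ω) (X Y : Ω → ℝ) : ℝ :=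
  (∫ ω, X ω * Y ω ∂μ) - (∫ ω, X ω ∂μ) * (∫ ω, Y ω ∂μ)

open Finset
open scoped ENNReal Nat

lemma hasSum_poisson_mul_descFactorial {c : ℝ} (hc : 0 ≤ c) (n : ℕ) :
    HasSum (fun k : ℕ => Real.exp (-c) * c ^ k / k ! * k.descFactorial n) (c ^ n) := by
  -- the terms with `k < n` vanish, and `(k + n).descFactorial n / (k + n)! = 1 / k!`
  refine (hasSum_nat_add_iff' n).mp ?_
  have hinit : ∑ k ∈ range n, Real.exp (-c) * c ^ k / k ! * k.descFactorial n = 0 :=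
    sum_eq_zero fun k hk => by simp [Nat.descFactorial_eq_zero_iff_lt.mpr (mem_range.mp hk)]
  have hpois := (hasSum_one_poissonMeasure ⟨c, hc⟩).mul_left (c ^ n)
  rw [hinit, sub_zero, ← mul_one (c ^ n)]
  refine hpois.congr_fun fun k => ?_
  change _ = c ^ n * (Real.exp (-c) * c ^ k / k !)
  have hfac : (k ! : ℝ) * (k + n).descFactorial n = (k + n)! := by
    exact_mod_cast Nat.add_sub_cancel k n ▸ Nat.factorial_mul_descFactorial (Nat.le_add_left n k)
  rw [← hfac, pow_add]
  field_simp

lemma tsum_ofReal_poisson_mul_descFactorial {c : ℝ} (hc : 0 ≤ c) (n : ℕ) :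
    ∑' k : ℕ, ENNReal.ofReal (Real.exp (-c) * c ^ k / k !) * (k.descFactorial n : ℝ≥0∞)
      = ENNReal.ofReal c ^ n := by
  have hterm (k : ℕ) : ENNReal.ofReal (Real.exp (-c) * c ^ k / k !) * (k.descFactorial n : ℝ≥0∞)
      = ENNReal.ofReal (Real.exp (-c) * c ^ k / k ! * k.descFactorial n) := by
    rw [ENNReal.ofReal_mul (by positivity), ENNReal.ofReal_natCast]
  simp_rw [hterm]
  rw [← ENNReal.ofReal_tsum_of_nonneg (fun k => by positivity)
    (hasSum_poisson_mul_descFactorial hc n).summable,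
    (hasSum_poisson_mul_descFactorial hc n).tsum_eq, ENNReal.ofReal_pow hc]

lemma tsum_ofReal_poisson_mul_natCast {c : ℝ} (hc : 0 ≤ c) :
    ∑' k : ℕ, ENNReal.ofReal (Real.exp (-c) * c ^ k / k !) * (k : ℝ≥0∞) = ENNReal.ofReal c := by
  simpa using tsum_ofReal_poisson_mul_descFactorial hc 1

lemma lintegral_comp_eq_tsum_of_indepFun {Ω ι β : Type*} [MeasurableSpace Ω] [MeasurableSpace ι]
    [MeasurableSingletonClass ι] [Countable ι] [MeasurableSpace β] {μ : Measure Ω}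
    {K : Ω → ι} {V : Ω → β} (hK : Measurable K) (hV : Measurable V) (hKV : IndepFun K V μ)
    {h : ι → β → ℝ≥0∞} (hh : ∀ k, Measurable (h k)) :
    ∫⁻ ω, h (K ω) (V ω) ∂μ = ∑' k, μ (K ⁻¹' {k}) * ∫⁻ ω, h k (V ω) ∂μ := by
  have hdecomp (ω : Ω) : h (K ω) (V ω) = ∑' k, (K ⁻¹' {k}).indicator 1 ω * h k (V ω) := by
    rw [tsum_eq_single (K ω) fun k hk => by simp [Ne.symm hk]]
    simp
  have hind (k : ι) : Measurable ((K ⁻¹' {k}).indicator (1 : Ω → ℝ≥0∞)) :=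
    measurable_one.indicator (hK (measurableSet_singleton k))
  have hhV (k : ι) : Measurable fun ω => h k (V ω) := (hh k).comp hV
  simp_rw [hdecomp]
  rw [lintegral_tsum fun k => ((hind k).fun_mul (hhV k)).aemeasurable]
  refine tsum_congr fun k => ?_
  have hindep : IndepFun ((K ⁻¹' {k}).indicator (1 : Ω → ℝ≥0∞)) (fun ω => h k (V ω)) μ := by
    have : (K ⁻¹' {k}).indicator (1 : Ω → ℝ≥0∞) = ({k} : Set ι).indicator 1 ∘ K := by
      ext ω; exact Set.indicator_comp_right (g := (1 : ι → ℝ≥0∞)) K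
    rw [this]
    exact hKV.comp (measurable_one.indicator (measurableSet_singleton k)) (hh k)
  rw [lintegral_mul_eq_lintegral_mul_lintegral_of_indepFun'' (hind k).aemeasurable
    (hhV k).aemeasurable hindep, lintegral_indicator_one (hK (measurableSet_singleton k))]

section NatValued

variable {Ω : Type*} [MeasurableSpace Ω] {μ : Measure Ω}

lemma lintegral_natCast_eq_measure_of_le_one {X : Ω → ℕ} (hX : Measurable X)
    (hX1 : ∀ ω, X ω ≤ 1) : ∫⁻ ω, (X ω : ℝ≥0∞) ∂μ = μ {ω | X ω = 1} := by
  have hind : (fun ω => (X ω : ℝ≥0∞)) = {ω | X ω = 1}.indicator 1 := by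
    ext ω
    rcases Nat.le_one_iff_eq_zero_or_eq_one.mp (hX1 ω) with h | h <;> simp [h]
  rw [hind]
  exact lintegral_indicator_one (hX (measurableSet_singleton 1))

lemma lintegral_natCast_mul_of_indepFun {X Y : Ω → ℕ} (hX : Measurable X) (hY : Measurable Y)
    (hXY : IndepFun X Y μ) :
    ∫⁻ ω, (X ω : ℝ≥0∞) * Y ω ∂μ = (∫⁻ ω, (X ω : ℝ≥0∞) ∂μ) * ∫⁻ ω, (Y ω : ℝ≥0∞) ∂μ :=
  lintegral_mul_eq_lintegral_mul_lintegral_of_indepFun'' (by fun_prop) (by fun_prop)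
    (hXY.comp measurable_from_top measurable_from_top)

lemma lintegral_sum_range_mul_sum_range {X Y : ℕ → Ω → ℝ≥0∞} (hX : ∀ i, Measurable (X i))
    (hY : ∀ i, Measurable (Y i)) {a b : ℝ≥0∞}
    (hXY : ∀ i j, ∫⁻ ω, X i ω * Y j ω ∂μ = if i = j then a else b) (k : ℕ) :
    ∫⁻ ω, (∑ i ∈ range k, X i ω) * ∑ j ∈ range k, Y j ω ∂μ
      = k * a + k.descFactorial 2 * b := by
  have hrow (i : ℕ) (hi : i ∈ range k) :
      ∫⁻ ω, ∑ j ∈ range k, X i ω * Y j ω ∂μ = a + (k - 1 : ℕ) * b := by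
    rw [lintegral_finsetSum' _ fun j _ => ((hX i).fun_mul (hY j)).aemeasurable,
      ← add_sum_erase _ _ hi, hXY, if_pos rfl,
      sum_congr rfl fun j hj => (hXY i j).trans (if_neg (ne_of_mem_erase hj).symm)]
    simp [card_erase_of_mem hi]
  simp_rw [sum_mul_sum]
  rw [lintegral_finsetSum' _ fun i _ =>
    (Finset.measurable_sum _ fun j _ => (hX i).fun_mul (hY j)).aemeasurable,
    sum_congr rfl hrow]
  simp [Nat.descFactorial_succ, ← mul_assoc, mul_comm]

lemma integral_natCast_of_lintegral_eq {f : Ω → ℕ} (hf : Measurable f) {s : ℝ} (hs : 0 ≤ s)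
    (h : ∫⁻ ω, (f ω : ℝ≥0∞) ∂μ = ENNReal.ofReal s) : ∫ ω, (f ω : ℝ) ∂μ = s := by
  rw [integral_eq_lintegral_of_nonneg_ae (ae_of_all μ fun ω => Nat.cast_nonneg _) (by fun_prop)]
  simp_rw [ENNReal.ofReal_natCast, h, ENNReal.toReal_ofReal hs]

lemma variance_natCast_of_lintegral_eq [IsProbabilityMeasure μ] {f : Ω → ℕ} (hf : Measurable f)
    {m s : ℝ} (hm : 0 ≤ m) (hs : 0 ≤ s) (h1 : ∫⁻ ω, (f ω : ℝ≥0∞) ∂μ = ENNReal.ofReal m)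
    (h2 : ∫⁻ ω, ((f ω * f ω : ℕ) : ℝ≥0∞) ∂μ = ENNReal.ofReal s) :
    variance (fun ω => (f ω : ℝ)) μ = s - m ^ 2 := by
  have hsq : ∫ ω, (f ω : ℝ) ^ 2 ∂μ = s := by
    simpa [sq] using integral_natCast_of_lintegral_eq (hf.mul hf) hs h2
  have hL2 : MemLp (fun ω => (f ω : ℝ)) 2 μ := by
    rw [memLp_two_iff_integrable_sq (by fun_prop)]
    refine ⟨by fun_prop, (hasFiniteIntegral_iff_ofReal (ae_of_all μ fun ω => sq_nonneg _)).2 ?_⟩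
    simp_rw [sq, ← Nat.cast_mul, ENNReal.ofReal_natCast, h2]
    exact ENNReal.ofReal_lt_top
  rw [variance_eq_sub hL2, integral_natCast_of_lintegral_eq hf hm h1]
  simpa using hsq

end NatValued

def compoundSum {Ω : Type*} (K : Ω → ℕ) (X : ℕ → Ω → ℕ) (ω : Ω) : ℕ :=
  ∑ i ∈ range (K ω), X i ω

section Poisson

variable {Ω : Type*} [MeasurableSpace Ω] {μ : Measure Ω} {K : Ω → ℕ}

lemma measurable_compoundSum (hK : Measurable K) {X : ℕ → Ω → ℕ} (hX : ∀ i, Measurable (X i)) :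
    Measurable (compoundSum K X) := by
  have hjoint : Measurable fun x : Ω × ℕ => ∑ i ∈ range x.2, X i x.1 :=
    measurable_from_prod_countable_left fun k => Finset.measurable_sum (range k) fun i _ => hX i
  exact hjoint.comp (measurable_id.prodMk hK)

variable {c : ℝ} (hc : 0 ≤ c) (hK : Measurable K)
  (hKpois : ∀ k : ℕ, μ {ω | K ω = k} = ENNReal.ofReal (Real.exp (-c) * c ^ k / k !))
include hc hK hKpois

lemma lintegral_compoundSum {X : ℕ → Ω → ℕ} (hX : ∀ i, Measurable (X i))
    (hKX : IndepFun K (fun ω i => X i ω) μ) {a : ℝ}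
    (hXa : ∀ i, ∫⁻ ω, (X i ω : ℝ≥0∞) ∂μ = ENNReal.ofReal a) :
    ∫⁻ ω, (compoundSum K X ω : ℝ≥0∞) ∂μ = ENNReal.ofReal (c * a) := by
  refine (lintegral_comp_eq_tsum_of_indepFun hK (measurable_pi_lambda _ hX) hKX
    (h := fun k v => ((∑ i ∈ range k, v i : ℕ) : ℝ≥0∞)) fun k => by fun_prop).trans ?_
  have hmom (k : ℕ) : ∫⁻ ω, ((∑ i ∈ range k, X i ω : ℕ) : ℝ≥0∞) ∂μ = k * ENNReal.ofReal a := by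
    push_cast
    rw [lintegral_finsetSum' _ fun i _ => by fun_prop]
    simp [hXa]
  simp_rw [Set.preimage, Set.mem_singleton_iff, hKpois, hmom, ← mul_assoc, ENNReal.tsum_mul_right,
    tsum_ofReal_poisson_mul_natCast hc, ENNReal.ofReal_mul hc]

lemma lintegral_compoundSum_mul {X Y : ℕ → Ω → ℕ} (hX : ∀ i, Measurable (X i))
    (hY : ∀ i, Measurable (Y i)) (hKXY : IndepFun K (fun ω i => (X i ω, Y i ω)) μ)
    {a b : ℝ} (ha : 0 ≤ a) (hb : 0 ≤ b) (hXY : ∀ i j,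
      ∫⁻ ω, (X i ω : ℝ≥0∞) * Y j ω ∂μ = if i = j then ENNReal.ofReal a else ENNReal.ofReal b) :
    ∫⁻ ω, ((compoundSum K X ω * compoundSum K Y ω : ℕ) : ℝ≥0∞) ∂μ
      = ENNReal.ofReal (c * a + c ^ 2 * b) := by
  refine (lintegral_comp_eq_tsum_of_indepFun hK
    (measurable_pi_lambda _ fun i => (hX i).prodMk (hY i)) hKXY
    (h := fun k v => (((∑ i ∈ range k, (v i).1) * ∑ i ∈ range k, (v i).2 : ℕ) : ℝ≥0∞))
    fun k => by fun_prop).trans ?_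
  have hmom (k : ℕ) :
      ∫⁻ ω, (((∑ i ∈ range k, X i ω) * ∑ i ∈ range k, Y i ω : ℕ) : ℝ≥0∞) ∂μ
      = k * ENNReal.ofReal a + k.descFactorial 2 * ENNReal.ofReal b := by
    push_cast
    exact lintegral_sum_range_mul_sum_range (fun i => measurable_from_top.comp (hX i))
      (fun i => measurable_from_top.comp (hY i)) hXY k
  simp_rw [Set.preimage, Set.mem_singleton_iff, hKpois, hmom, mul_add, ← mul_assoc,
    ENNReal.tsum_add, ENNReal.tsum_mul_right, tsum_ofReal_poisson_mul_natCast hc,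
    tsum_ofReal_poisson_mul_descFactorial hc]
  rw [ENNReal.ofReal_add (by positivity) (by positivity), ENNReal.ofReal_mul hc,
    ENNReal.ofReal_mul (by positivity), ENNReal.ofReal_pow hc]

end Poisson

section Bernoulli

variable {Ω : Type*} [MeasurableSpace Ω] {μ : Measure Ω} {p : ℝ}

lemma lintegral_natCast_mul_of_indepFun_of_bernoulli (hp : 0 ≤ p) {X Y : Ω → ℕ}
    (hX : Measurable X) (hY : Measurable Y) (hX1 : ∀ ω, X ω ≤ 1) (hY1 : ∀ ω, Y ω ≤ 1)
    (hXp : μ {ω | X ω = 1} = ENNReal.ofReal p) (hYp : μ {ω | Y ω = 1} = ENNReal.ofReal p)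
    (hXY : IndepFun X Y μ) :
    ∫⁻ ω, (X ω : ℝ≥0∞) * Y ω ∂μ = ENNReal.ofReal (p ^ 2) := by
  rw [lintegral_natCast_mul_of_indepFun hX hY hXY, lintegral_natCast_eq_measure_of_le_one hX hX1,
    lintegral_natCast_eq_measure_of_le_one hY hY1, hXp, hYp, ← ENNReal.ofReal_mul hp, sq]

lemma lintegral_natCast_mul_eq_ite_of_bernoulli (hp : 0 ≤ p) {X : ℕ → Ω → ℕ}
    (hX : ∀ i, Measurable (X i)) (hX1 : ∀ i ω, X i ω ≤ 1)
    (hXp : ∀ i, μ {ω | X i ω = 1} = ENNReal.ofReal p)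
    (hind : Pairwise fun i j => IndepFun (X i) (X j) μ) (i j : ℕ) :
    ∫⁻ ω, (X i ω : ℝ≥0∞) * X j ω ∂μ
      = if i = j then ENNReal.ofReal p else ENNReal.ofReal (p ^ 2) := by
  split_ifs with hij
  · subst hij
    have hidem (ω : Ω) : (X i ω : ℝ≥0∞) * X i ω = X i ω := by
      rcases Nat.le_one_iff_eq_zero_or_eq_one.mp (hX1 i ω) with h | h <;> simp [h]
    simp_rw [hidem, lintegral_natCast_eq_measure_of_le_one (hX i) (hX1 i), hXp]
  · exact lintegral_natCast_mul_of_indepFun_of_bernoulli hp (hX i) (hX j) (hX1 i) (hX1 j)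
      (hXp i) (hXp j) (hind hij)

variable {K : Ω → ℕ} {c : ℝ} (hc : 0 ≤ c) (hK : Measurable K)
  (hKpois : ∀ k : ℕ, μ {ω | K ω = k} = ENNReal.ofReal (Real.exp (-c) * c ^ k / k !))
  {X : ℕ → Ω → ℕ} (hX : ∀ i, Measurable (X i)) (hX1 : ∀ i ω, X i ω ≤ 1)
  (hXp : ∀ i, μ {ω | X i ω = 1} = ENNReal.ofReal p)
include hc hK hKpois hX hX1 hXp

lemma lintegral_compoundSum_of_bernoulli (hKX : IndepFun K (fun ω i => X i ω) μ) :
    ∫⁻ ω, (compoundSum K X ω : ℝ≥0∞) ∂μ = ENNReal.ofReal (c * p) :=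
  lintegral_compoundSum hc hK hKpois hX hKX fun i =>
    (lintegral_natCast_eq_measure_of_le_one (hX i) (hX1 i)).trans (hXp i)

lemma integral_compoundSum_of_bernoulli (hp : 0 ≤ p) (hKX : IndepFun K (fun ω i => X i ω) μ) :
    ∫ ω, (compoundSum K X ω : ℝ) ∂μ = c * p :=
  integral_natCast_of_lintegral_eq (measurable_compoundSum hK hX) (by positivity)
    (lintegral_compoundSum_of_bernoulli hc hK hKpois hX hX1 hXp hKX)

lemma variance_compoundSum_of_bernoulli [IsProbabilityMeasure μ] (hp : 0 ≤ p)
    (hKX : IndepFun K (fun ω i => X i ω) μ) (hind : Pairwise fun i j => IndepFun (X i) (X j) μ) :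
    variance (fun ω => (compoundSum K X ω : ℝ)) μ = c * p := by
  have hKXX : IndepFun K (fun ω i => (X i ω, X i ω)) μ :=
    hKX.comp measurable_id (measurable_pi_lambda _ fun i =>
      (measurable_pi_apply i).prodMk (measurable_pi_apply i))
  rw [variance_natCast_of_lintegral_eq (measurable_compoundSum hK hX) (by positivity)
    (by positivity) (lintegral_compoundSum_of_bernoulli hc hK hKpois hX hX1 hXp hKX)
    (lintegral_compoundSum_mul hc hK hKpois hX hX hKXX hp (sq_nonneg p)
      (lintegral_natCast_mul_eq_ite_of_bernoulli hp hX hX1 hXp hind))]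
  ring

lemma integral_compoundSum_mul_of_bernoulli (hp : 0 ≤ p) {Y : ℕ → Ω → ℕ}
    (hY : ∀ i, Measurable (Y i)) (hY1 : ∀ i ω, Y i ω ≤ 1)
    (hYp : ∀ i, μ {ω | Y i ω = 1} = ENNReal.ofReal p)
    (hKXY : IndepFun K (fun ω i => (X i ω, Y i ω)) μ) (hXY : ∀ i j, IndepFun (X i) (Y j) μ) :
    ∫ ω, (compoundSum K X ω : ℝ) * compoundSum K Y ω ∂μ = c * p ^ 2 + c ^ 2 * p ^ 2 := by
  have hmoment := lintegral_compoundSum_mul hc hK hKpois hX hY hKXY (sq_nonneg p) (sq_nonneg p)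
    fun i j => (ite_self _).symm ▸ lintegral_natCast_mul_of_indepFun_of_bernoulli hp (hX i) (hY j)
      (hX1 i) (hY1 j) (hXp i) (hYp j) (hXY i j)
  simpa using integral_natCast_of_lintegral_eq
    ((measurable_compoundSum hK hX).mul (measurable_compoundSum hK hY)) (by positivity) hmoment

end Bernoulli

/-- For the constant density kernel `f(x,y) = p`, `p ∈ (0,1]`, and Poisson
counting law `K ~ Poisson(c)`, `c > 0` (so `δ² = c`), the degrees `d(x) = Σ_{i<K} Z_i` and
`d(y) = Σ_{i<K} W_i` (for `x ≠ y`, built from i.i.d. pairs of independent Bernoulli(p)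
variables, independent of `K`) satisfy `Cov(d(x), d(y)) = c p²`,
`Var(d(x)) = Var(d(y)) = c p`, and hence `Corr(d(x), d(y)) = p`: the Poisson random measure
correlates the density field. -/
theorem stmt_7 {Ω : Type*} [MeasurableSpace Ω] (μ : Measure Ω) [IsProbabilityMeasure μ]
    (c : ℝ) (hc : 0 < c) (p : ℝ) (hp : p ∈ Set.Ioc (0:ℝ) 1)
    (K : Ω → ℕ) (hK : Measurable K)
    (hKpois : ∀ k : ℕ,
      μ {ω | K ω = k} = ENNReal.ofReal (Real.exp (-c) * c ^ k / (Nat.factorial k)))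
    (Z W : ℕ → Ω → ℕ)
    (hZm : ∀ i, Measurable (Z i)) (hWm : ∀ i, Measurable (W i))
    (hZ01 : ∀ i ω, Z i ω ≤ 1) (hW01 : ∀ i ω, W i ω ≤ 1)
    (hZp : ∀ i, μ {ω | Z i ω = 1} = ENNReal.ofReal p)
    (hWp : ∀ i, μ {ω | W i ω = 1} = ENNReal.ofReal p)
    (hZW : ∀ i, IndepFun (Z i) (W i) μ)
    (hpairs : iIndepFun (m := fun _ : ℕ => (inferInstance : MeasurableSpace (ℕ × ℕ)))
      (fun i ω => (Z i ω, W i ω)) μ)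
    (hKindep : IndepFun K (fun ω => fun i : ℕ => (Z i ω, W i ω)) μ) :
    cov μ (fun ω => ((∑ i ∈ Finset.range (K ω), Z i ω : ℕ) : ℝ))
          (fun ω => ((∑ i ∈ Finset.range (K ω), W i ω : ℕ) : ℝ)) = c * p ^ 2 ∧
    variance (fun ω => ((∑ i ∈ Finset.range (K ω), Z i ω : ℕ) : ℝ)) μ = c * p ∧
    variance (fun ω => ((∑ i ∈ Finset.range (K ω), W i ω : ℕ) : ℝ)) μ = c * p ∧
    cov μ (fun ω => ((∑ i ∈ Finset.range (K ω), Z i ω : ℕ) : ℝ))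
          (fun ω => ((∑ i ∈ Finset.range (K ω), W i ω : ℕ) : ℝ))
      / Real.sqrt
          ((variance (fun ω => ((∑ i ∈ Finset.range (K ω), Z i ω : ℕ) : ℝ)) μ)
            * (variance (fun ω => ((∑ i ∈ Finset.range (K ω), W i ω : ℕ) : ℝ)) μ)) = p := by
  obtain ⟨hp, -⟩ := hp
  have hKZ : IndepFun K (fun ω i => Z i ω) μ := hKindep.comp measurable_id
    (measurable_pi_lambda _ fun i => measurable_fst.comp (measurable_pi_apply i))
  have hKW : IndepFun K (fun ω i => W i ω) μ := hKindep.comp measurable_id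
    (measurable_pi_lambda _ fun i => measurable_snd.comp (measurable_pi_apply i))
  have hZWij (i j : ℕ) : IndepFun (Z i) (W j) μ := by
    rcases eq_or_ne i j with rfl | hij
    · exact hZW i
    · exact (hpairs.indepFun hij).comp measurable_fst measurable_snd
  have hvarZ := variance_compoundSum_of_bernoulli hc.le hK hKpois hZm hZ01 hZp hp.le hKZ
    fun i j hij => (hpairs.indepFun hij).comp measurable_fst measurable_fst
  have hvarW := variance_compoundSum_of_bernoulli hc.le hK hKpois hWm hW01 hWp hp.le hKW
    fun i j hij => (hpairs.indepFun hij).comp measurable_snd measurable_snd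
  have hcov : cov μ (fun ω => (compoundSum K Z ω : ℝ)) (fun ω => (compoundSum K W ω : ℝ))
      = c * p ^ 2 := by
    rw [cov, integral_compoundSum_mul_of_bernoulli hc.le hK hKpois hZm hZ01 hZp hp.le hWm hW01 hWp
      hKindep hZWij, integral_compoundSum_of_bernoulli hc.le hK hKpois hZm hZ01 hZp hp.le hKZ,
      integral_compoundSum_of_bernoulli hc.le hK hKpois hWm hW01 hWp hp.le hKW]
    ring
  simp only [← compoundSum.eq_def]
  refine ⟨hcov, hvarZ, hvarW, ?_⟩
  rw [hcov, hvarZ, hvarW, Real.sqrt_mul_self (by positivity)]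
  field_simp
end

section
/- For the constant density kernel f(x,y) = p with p ∈ (0,1) and counting law with mean c > 0 and variance δ² > 0, the degree correlation for x ≠ y equals Corr(d(x), d(y)) = δ² p² / (c p + (δ² − c) p²) = δ² p / (c + (δ² − c) p), and for fixed c > 0 and p ∈ (0,1) this quantity is strictly increasing in δ²; in particular binomial counting (δ² < c) has reduced and negative binomial counting (δ² > c) has increased degree correlation relative to Poisson (δ² = c). -/
/-! Conditioning on the independent count `K`: for fixed `n`, the sums `Sₙ = ∑_{i<n} Zᵢ` and
`Tₙ = ∑_{i<n} Wᵢ` satisfy `E[Sₙ Tₙ] = n² p²` and `E[Sₙ²] = n p + (n² - n) p²`, so averaging over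
`K` gives `Cov(d(x), d(y)) = p² Var K = δ² p²` and `Var d(x) = p c + p² (δ² - c)`.
The map `t ↦ t p / (c + (t - c) p)` is a Möbius map of determinant `c p (1 - p) > 0`, hence
increasing, and it takes the value `p` at the Poisson point `t = c`. -/

open MeasureTheory ProbabilityTheory

open Finset

section General

variable {Ω : Type*} [MeasurableSpace Ω] {μ : Measure Ω}

theorem integrable_of_abs_le_one [IsFiniteMeasure μ] {f : Ω → ℝ} (hf : Measurable f)
    (hf1 : ∀ ω, |f ω| ≤ 1) : Integrable f μ :=
  .of_bound hf.aestronglyMeasurable 1 (.of_forall hf1)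

variable [IsProbabilityMeasure μ]

theorem variance_eq_cov_self {Z : Ω → ℝ} (hZ : MemLp Z 2 μ) : variance Z μ = cov μ Z Z := by
  rw [variance_eq_sub hZ, cov]
  simp [sq]

theorem sum_range_sum_range_ite (n : ℕ) (r s : ℝ) :
    ∑ i ∈ range n, ∑ j ∈ range n, (if i = j then r else s) = (r - s) * n + s * n ^ 2 := by
  have h : ∀ i j : ℕ, (if i = j then r else s) = (if i = j then r - s else 0) + s := by
    intro i j; split_ifs <;> ring
  simp only [h, sum_add_distrib, sum_ite_eq, sum_const, card_range, nsmul_eq_mul]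
  rw [sum_ite_of_true fun _ hi => hi]
  simp only [sum_const, card_range, nsmul_eq_mul]
  ring

theorem integral_comp_eq_integral_integral_of_indepFun {α : Type*} [MeasurableSpace α]
    {K : Ω → ℕ} {V : Ω → α}
    (hK : Measurable K) (hV : Measurable V) (hKV : IndepFun K V μ) {G : ℕ → α → ℝ}
    (hG : ∀ n, Measurable (G n)) (hGi : Integrable (fun ω => G (K ω) (V ω)) μ) :
    ∫ ω, G (K ω) (V ω) ∂μ = ∫ ω, ∫ ω', G (K ω) (V ω') ∂μ ∂μ := by
  have hG' : Measurable (Function.uncurry G) := measurable_from_prod_countable_right hG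
  have hmap := (indepFun_iff_map_prod_eq_prod_map_map hK.aemeasurable hV.aemeasurable).1 hKV
  have hGi' : Integrable (Function.uncurry G) ((μ.map K).prod (μ.map V)) := by
    rw [← hmap, integrable_map_measure hG'.aestronglyMeasurable (hK.prodMk hV).aemeasurable]
    exact hGi
  calc ∫ ω, G (K ω) (V ω) ∂μ = ∫ x, Function.uncurry G x ∂(μ.map fun ω => (K ω, V ω)) :=
        (integral_map (hK.prodMk hV).aemeasurable hG'.aestronglyMeasurable).symm
    _ = ∫ n, ∫ v, G n v ∂(μ.map V) ∂(μ.map K) := by rw [hmap, integral_prod _ hGi']; rfl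
    _ = ∫ ω, ∫ ω', G (K ω) (V ω') ∂μ ∂μ := by
        rw [integral_map hK.aemeasurable (measurable_of_countable _).aestronglyMeasurable]
        congr 1 with ω
        exact integral_map hV.aemeasurable (hG _).aestronglyMeasurable

end General

section RandomSum

variable {Ω : Type*}

noncomputable def randomSum (K : Ω → ℕ) (X : ℕ → Ω → ℝ) : Ω → ℝ :=
  fun ω => ∑ i ∈ range (K ω), X i ω

variable {K : Ω → ℕ} {X Y : ℕ → Ω → ℝ}

theorem abs_randomSum_le (hX1 : ∀ i ω, |X i ω| ≤ 1) (ω : Ω) : |randomSum K X ω| ≤ K ω :=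
  (abs_sum_le_sum_abs _ _).trans <| by
    simpa using Finset.sum_le_sum fun i (_ : i ∈ range (K ω)) => hX1 i ω

variable [MeasurableSpace Ω]

theorem measurable_randomSum (hK : Measurable K) (hX : ∀ i, Measurable (X i)) :
    Measurable (randomSum K X) := by
  have hsum : Measurable fun q : ℕ × (ℕ → ℝ) => ∑ i ∈ range q.1, q.2 i :=
    measurable_from_prod_countable_right fun n =>
      Finset.measurable_sum (range n) fun i _ => measurable_pi_apply i
  exact hsum.comp (hK.prodMk (measurable_pi_lambda _ hX))

variable {μ : Measure Ω}

theorem memLp_randomSum (hK : Measurable K) (hK2 : MemLp (fun ω => (K ω : ℝ)) 2 μ)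
    (hX : ∀ i, Measurable (X i)) (hX1 : ∀ i ω, |X i ω| ≤ 1) : MemLp (randomSum K X) 2 μ :=
  hK2.of_le (measurable_randomSum hK hX).aestronglyMeasurable <| .of_forall fun ω => by
    simpa [Real.norm_eq_abs] using abs_randomSum_le hX1 ω

variable [IsProbabilityMeasure μ]

section Moments

variable (hK : Measurable K) (hK2 : MemLp (fun ω => (K ω : ℝ)) 2 μ)
  (hX : ∀ i, Measurable (X i)) (hX1 : ∀ i ω, |X i ω| ≤ 1)
  (hY : ∀ i, Measurable (Y i)) (hY1 : ∀ i ω, |Y i ω| ≤ 1)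
include hK hK2 hX hX1

theorem integral_randomSum (hind : IndepFun K (fun ω i => X i ω) μ) {m : ℝ}
    (hXm : ∀ i, ∫ ω, X i ω ∂μ = m) : ∫ ω, randomSum K X ω ∂μ = m * ∫ ω, (K ω : ℝ) ∂μ := by
  have hsum (n : ℕ) : ∫ ω, ∑ i ∈ range n, X i ω ∂μ = n * m := by
    rw [integral_finsetSum _ fun i _ => integrable_of_abs_le_one (hX i) (hX1 i)]
    simp [hXm]
  refine (integral_comp_eq_integral_integral_of_indepFun hK (measurable_pi_lambda _ hX)
    hind (G := fun n v => ∑ i ∈ range n, v i)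
    (fun n => Finset.measurable_sum (range n) fun i _ => measurable_pi_apply i)
    ((memLp_randomSum hK hK2 hX hX1).integrable one_le_two)).trans ?_
  simp only [hsum, mul_comm _ m, integral_const_mul]

include hY hY1 in
theorem integral_randomSum_mul_randomSum (hind : IndepFun K (fun ω i => (X i ω, Y i ω)) μ)
    {r s : ℝ} (hXY : ∀ i j, ∫ ω, X i ω * Y j ω ∂μ = if i = j then r else s) :
    ∫ ω, randomSum K X ω * randomSum K Y ω ∂μ =
      (r - s) * ∫ ω, (K ω : ℝ) ∂μ + s * ∫ ω, (K ω : ℝ) ^ 2 ∂μ := by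
  have hXYi (i j : ℕ) : Integrable (fun ω => X i ω * Y j ω) μ :=
    integrable_of_abs_le_one ((hX i).mul (hY j)) fun ω => by
      rw [abs_mul]; exact mul_le_one₀ (hX1 i ω) (abs_nonneg _) (hY1 j ω)
  have hsum (n : ℕ) : ∫ ω, (∑ i ∈ range n, X i ω) * ∑ j ∈ range n, Y j ω ∂μ =
      (r - s) * n + s * n ^ 2 := by
    simp_rw [sum_mul_sum]
    rw [integral_finsetSum _ fun i _ => integrable_finsetSum _ fun j _ => hXYi i j]
    simp_rw [integral_finsetSum _ fun j _ => hXYi _ j, hXY]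
    exact sum_range_sum_range_ite n r s
  refine (integral_comp_eq_integral_integral_of_indepFun hK
    (measurable_pi_lambda _ fun i => (hX i).prodMk (hY i)) hind
    (G := fun n v => (∑ i ∈ range n, (v i).1) * ∑ j ∈ range n, (v j).2)
    (fun n => (Finset.measurable_sum (range n) fun i _ => by fun_prop).mul
      (Finset.measurable_sum (range n) fun i _ => by fun_prop))
    ((memLp_randomSum hK hK2 hX hX1).integrable_mul (memLp_randomSum hK hK2 hY hY1))).trans ?_
  simp only [hsum]
  rw [integral_add, integral_const_mul, integral_const_mul]
  · exact (hK2.integrable one_le_two).const_mul _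
  · exact hK2.integrable_sq.const_mul _

include hY hY1 in
theorem cov_randomSum (hind : IndepFun K (fun ω i => (X i ω, Y i ω)) μ) {mX mY r s : ℝ}
    (hXm : ∀ i, ∫ ω, X i ω ∂μ = mX) (hYm : ∀ i, ∫ ω, Y i ω ∂μ = mY)
    (hXY : ∀ i j, ∫ ω, X i ω * Y j ω ∂μ = if i = j then r else s) :
    cov μ (randomSum K X) (randomSum K Y) =
      (r - s) * ∫ ω, (K ω : ℝ) ∂μ + s * ∫ ω, (K ω : ℝ) ^ 2 ∂μ
        - mX * mY * (∫ ω, (K ω : ℝ) ∂μ) ^ 2 := by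
  have hpr1 : Measurable fun v : ℕ → ℝ × ℝ => fun i => (v i).1 := by fun_prop
  have hpr2 : Measurable fun v : ℕ → ℝ × ℝ => fun i => (v i).2 := by fun_prop
  rw [cov, integral_randomSum_mul_randomSum hK hK2 hX hX1 hY hY1 hind hXY,
    integral_randomSum hK hK2 hX hX1 (hind.comp measurable_id hpr1) hXm,
    integral_randomSum hK hK2 hY hY1 (hind.comp measurable_id hpr2) hYm]
  ring

end Moments

end RandomSum

section Bernoulli

variable {Ω : Type*} [MeasurableSpace Ω] {μ : Measure Ω} {p q : ℝ}

theorem integral_natCast_eq_of_le_one {U : Ω → ℕ} (hU : Measurable U) (hU1 : ∀ ω, U ω ≤ 1)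
    (hp : 0 ≤ p) (hUp : μ {ω | U ω = 1} = ENNReal.ofReal p) : ∫ ω, (U ω : ℝ) ∂μ = p := by
  have hU_eq : (fun ω => (U ω : ℝ)) = {ω | U ω = 1}.indicator 1 := by
    ext ω
    rcases Nat.le_one_iff_eq_zero_or_eq_one.mp (hU1 ω) with h | h <;> simp [h]
  have hmeas : MeasurableSet {ω | U ω = 1} := hU (measurableSet_singleton 1)
  rw [hU_eq, integral_indicator_one hmeas, measureReal_def, hUp,
    ENNReal.toReal_ofReal hp]

variable [IsProbabilityMeasure μ] {K : Ω → ℕ} {X Y : ℕ → Ω → ℕ}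

theorem cov_randomSum_bernoulli (hK : Measurable K) (hK2 : MemLp (fun ω => (K ω : ℝ)) 2 μ)
    (hX : ∀ i, Measurable (X i)) (hX1 : ∀ i ω, X i ω ≤ 1)
    (hp : 0 ≤ p) (hXp : ∀ i, μ {ω | X i ω = 1} = ENNReal.ofReal p)
    (hY : ∀ i, Measurable (Y i)) (hY1 : ∀ i ω, Y i ω ≤ 1)
    (hq : 0 ≤ q) (hYp : ∀ i, μ {ω | Y i ω = 1} = ENNReal.ofReal q)
    (hXY : ∀ i j, IndepFun (X i) (Y j) μ) (hind : IndepFun K (fun ω i => (X i ω, Y i ω)) μ) :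
    cov μ (randomSum K fun i ω => X i ω) (randomSum K fun i ω => Y i ω) =
      p * q * variance (fun ω => (K ω : ℝ)) μ := by
  have hcast : Measurable (Nat.cast : ℕ → ℝ) := measurable_of_countable _
  have hXr (i : ℕ) : Measurable fun ω => (X i ω : ℝ) := hcast.comp (hX i)
  have hYr (i : ℕ) : Measurable fun ω => (Y i ω : ℝ) := hcast.comp (hY i)
  have hEX (i : ℕ) : ∫ ω, (X i ω : ℝ) ∂μ = p :=
    integral_natCast_eq_of_le_one (hX i) (hX1 i) hp (hXp i)
  have hEY (i : ℕ) : ∫ ω, (Y i ω : ℝ) ∂μ = q :=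
    integral_natCast_eq_of_le_one (hY i) (hY1 i) hq (hYp i)
  have hXY' (i j : ℕ) : ∫ ω, (X i ω : ℝ) * Y j ω ∂μ = if i = j then p * q else p * q := by
    rw [ite_self, ← hEX i, ← hEY j]
    exact ((hXY i j).comp hcast hcast).integral_mul_eq_mul_integral
      (hXr i).aestronglyMeasurable (hYr j).aestronglyMeasurable
  have hcast2 : Measurable fun v : ℕ → ℕ × ℕ => fun i => (((v i).1 : ℝ), ((v i).2 : ℝ)) := by
    fun_prop
  have hind' : IndepFun K (fun ω i => ((X i ω : ℝ), (Y i ω : ℝ))) μ :=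
    hind.comp measurable_id hcast2
  rw [cov_randomSum hK hK2 hXr (by simpa using hX1) hYr (by simpa using hY1) hind' hEX hEY hXY',
    variance_eq_sub hK2]
  simp only [Pi.pow_apply]
  ring

theorem variance_randomSum_bernoulli (hK : Measurable K) (hK2 : MemLp (fun ω => (K ω : ℝ)) 2 μ)
    (hX : ∀ i, Measurable (X i)) (hX1 : ∀ i ω, X i ω ≤ 1)
    (hp : 0 ≤ p) (hXp : ∀ i, μ {ω | X i ω = 1} = ENNReal.ofReal p)
    (hXX : ∀ i j, i ≠ j → IndepFun (X i) (X j) μ) (hind : IndepFun K (fun ω i => X i ω) μ) :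
    variance (randomSum K fun i ω => X i ω) μ =
      p * ∫ ω, (K ω : ℝ) ∂μ + p ^ 2 * (variance (fun ω => (K ω : ℝ)) μ - ∫ ω, (K ω : ℝ) ∂μ) := by
  have hcast : Measurable (Nat.cast : ℕ → ℝ) := measurable_of_countable _
  have hXr (i : ℕ) : Measurable fun ω => (X i ω : ℝ) := hcast.comp (hX i)
  have hX1' : ∀ i ω, |(X i ω : ℝ)| ≤ 1 := by simpa using hX1
  have hEX (i : ℕ) : ∫ ω, (X i ω : ℝ) ∂μ = p :=
    integral_natCast_eq_of_le_one (hX i) (hX1 i) hp (hXp i)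
  have hXX' (i j : ℕ) : ∫ ω, (X i ω : ℝ) * X j ω ∂μ = if i = j then p else p ^ 2 := by
    by_cases hij : i = j
    · subst hij
      have hidem (ω : Ω) : (X i ω : ℝ) * X i ω = X i ω := by
        rcases Nat.le_one_iff_eq_zero_or_eq_one.mp (hX1 i ω) with h | h <;> simp [h]
      simp only [hidem, if_true, hEX]
    · rw [if_neg hij, sq]
      exact (((hXX i j hij).comp hcast hcast).integral_mul_eq_mul_integral
        (hXr i).aestronglyMeasurable (hXr j).aestronglyMeasurable).trans
        (by simp only [Function.comp_def, hEX])
  have hcast2 : Measurable fun v : ℕ → ℕ => fun i => ((v i : ℝ), (v i : ℝ)) := by fun_prop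
  have hind' : IndepFun K (fun ω i => ((X i ω : ℝ), (X i ω : ℝ))) μ :=
    hind.comp measurable_id hcast2
  rw [variance_eq_cov_self (memLp_randomSum hK hK2 hXr hX1'),
    cov_randomSum hK hK2 hXr hX1' hXr hX1' hind' hEX hEX hXX', variance_eq_sub hK2]
  simp only [Pi.pow_apply]
  ring

end Bernoulli

theorem strictMonoOn_mul_div_add_sub_mul {c p : ℝ} (hc : 0 < c) (hp : p ∈ Set.Ioo (0 : ℝ) 1) :
    StrictMonoOn (fun t : ℝ => t * p / (c + (t - c) * p)) (Set.Ioi 0) := by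
  obtain ⟨hp0, hp1⟩ := hp
  intro a ha b hb hab
  have hden (t : ℝ) (ht : 0 < t) : 0 < c + (t - c) * p := by nlinarith
  simp only
  rw [div_lt_div_iff₀ (hden a ha) (hden b hb)]
  nlinarith [mul_pos (mul_pos hc hp0) (mul_pos (sub_pos.mpr hab) (sub_pos.mpr hp1))]

/-- For the constant density kernel `f(x,y) = p`, `p ∈ (0,1)`, and a counting law
with mean `c > 0` and variance `δ² > 0`, the degree correlation for `x ≠ y` equals
`Corr(d(x), d(y)) = δ² p² / (c p + (δ² - c) p²) = δ² p / (c + (δ² - c) p)`, and for fixed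
`c > 0`, `p ∈ (0,1)` this quantity is strictly increasing in `δ²`; in particular binomial
counting (`δ² < c`) has reduced, and negative binomial counting (`δ² > c`) increased, degree
correlation relative to Poisson (`δ² = c`, correlation `p`). -/
theorem stmt_8 {Ω : Type*} [MeasurableSpace Ω] (μ : Measure Ω) [IsProbabilityMeasure μ]
    (p : ℝ) (hp : p ∈ Set.Ioo (0:ℝ) 1)
    (K : Ω → ℕ) (hK : Measurable K)
    (c δ2 : ℝ) (hc : 0 < c) (hδ2 : 0 < δ2)
    (hKc : ∫ ω, (K ω : ℝ) ∂μ = c)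
    (hK2 : MemLp (fun ω => (K ω : ℝ)) 2 μ)
    (hKvar : variance (fun ω => (K ω : ℝ)) μ = δ2)
    (Z W : ℕ → Ω → ℕ)
    (hZm : ∀ i, Measurable (Z i)) (hWm : ∀ i, Measurable (W i))
    (hZ01 : ∀ i ω, Z i ω ≤ 1) (hW01 : ∀ i ω, W i ω ≤ 1)
    (hZp : ∀ i, μ {ω | Z i ω = 1} = ENNReal.ofReal p)
    (hWp : ∀ i, μ {ω | W i ω = 1} = ENNReal.ofReal p)
    (hZW : ∀ i, IndepFun (Z i) (W i) μ)
    (hpairs : iIndepFun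
      (fun i ω => (Z i ω, W i ω)) μ)
    (hKindep : IndepFun K (fun ω => fun i : ℕ => (Z i ω, W i ω)) μ) :
    (cov μ (fun ω => ((∑ i ∈ Finset.range (K ω), Z i ω : ℕ) : ℝ))
           (fun ω => ((∑ i ∈ Finset.range (K ω), W i ω : ℕ) : ℝ))
        / Real.sqrt
            ((variance (fun ω => ((∑ i ∈ Finset.range (K ω), Z i ω : ℕ) : ℝ)) μ)
              * (variance (fun ω => ((∑ i ∈ Finset.range (K ω), W i ω : ℕ) : ℝ)) μ))
      = δ2 * p ^ 2 / (c * p + (δ2 - c) * p ^ 2)) ∧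
    δ2 * p ^ 2 / (c * p + (δ2 - c) * p ^ 2) = δ2 * p / (c + (δ2 - c) * p) ∧
    StrictMonoOn (fun t : ℝ => t * p / (c + (t - c) * p)) (Set.Ioi 0) ∧
    (δ2 < c → δ2 * p / (c + (δ2 - c) * p) < p) ∧
    (c < δ2 → p < δ2 * p / (c + (δ2 - c) * p)) := by
  obtain ⟨hp0, hp1⟩ := hp
  have hcast_sum (X : ℕ → Ω → ℕ) : (fun ω => ((∑ i ∈ range (K ω), X i ω : ℕ) : ℝ)) =
      randomSum K fun i ω => X i ω := funext fun ω => Nat.cast_sum _ _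
  have hZZ (i j : ℕ) (hij : i ≠ j) : IndepFun (Z i) (Z j) μ :=
    (hpairs.indepFun hij).comp measurable_fst measurable_fst
  have hWW (i j : ℕ) (hij : i ≠ j) : IndepFun (W i) (W j) μ :=
    (hpairs.indepFun hij).comp measurable_snd measurable_snd
  have hZW' (i j : ℕ) : IndepFun (Z i) (W j) μ := by
    rcases eq_or_ne i j with rfl | hij
    exacts [hZW i, (hpairs.indepFun hij).comp measurable_fst measurable_snd]
  have hfst : Measurable fun v : ℕ → ℕ × ℕ => fun i => (v i).1 := by fun_prop
  have hsnd : Measurable fun v : ℕ → ℕ × ℕ => fun i => (v i).2 := by fun_prop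
  have hKZ : IndepFun K (fun ω i => Z i ω) μ := hKindep.comp measurable_id hfst
  have hKW : IndepFun K (fun ω i => W i ω) μ := hKindep.comp measurable_id hsnd
  have hvar_pos : 0 < c * p + (δ2 - c) * p ^ 2 := by nlinarith [mul_pos hc hp0]
  have hmono := strictMonoOn_mul_div_add_sub_mul hc ⟨hp0, hp1⟩
  have hf_c : c * p / (c + (c - c) * p) = p := by field_simp; ring
  rw [hcast_sum Z, hcast_sum W,
    cov_randomSum_bernoulli hK hK2 hZm hZ01 hp0.le hZp hWm hW01 hp0.le hWp hZW' hKindep,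
    variance_randomSum_bernoulli hK hK2 hZm hZ01 hp0.le hZp hZZ hKZ,
    variance_randomSum_bernoulli hK hK2 hWm hW01 hp0.le hWp hWW hKW, hKc, hKvar]
  refine ⟨?_, by field_simp, hmono, fun h => ?_, fun h => ?_⟩
  · rw [Real.sqrt_mul_self (by linarith)]
    ring
  · simpa only [hf_c] using hmono hδ2 hc h
  · simpa only [hf_c] using hmono hc hδ2 h
end
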